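/- arXiv:1111.4537 — 2 statements merged into one kernel-verified Lean document; each statement's English description precedes it below -/
import Mathlib

section
/- Let P be a cone in a topological R-module E, and suppose there exists a sequence (α_n) of invertible elements of R with 0 ≺ α_n and α_n → 0. If u ∈ E satisfies 0 ≤_P u and u ≪ c for every c ∈ int P, then u = 0. -/
/-!
Fix c ∈ int P. Multiplication by the invertible α_n ≻ 0 is an open map sending P into P, so
α_n c ∈ int P and hence α_n c - u ∈ P. As α_n → 0 these points tend to -u, which therefore lies
in the closed set P; together with u ∈ P this forces u = 0 since P ∩ (-P) = {0}.
-/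

open Filter Topology

/-- A cone in a topological `R`-module `E`: closed, nonempty, not `{0}`,
closed under nonnegative `R`-linear combinations, and `P ∩ (-P) = {0}`. -/
def IsCone (R : Type*) {E : Type*} [Ring R] [PartialOrder R] [IsOrderedRing R] [AddCommGroup E] [Module R E]
    [TopologicalSpace E] (P : Set E) : Prop :=
  IsClosed P ∧ P.Nonempty ∧ P ≠ {0} ∧
    (∀ a b : R, 0 ≤ a → 0 ≤ b → ∀ x ∈ P, ∀ y ∈ P, a • x + b • y ∈ P) ∧
    P ∩ (-P) = {0}

variable {R : Type*} [Ring R] [PartialOrder R] [IsOrderedRing R] [TopologicalSpace R] [IsTopologicalRing R]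
variable {E : Type*} [AddCommGroup E] [Module R E] [TopologicalSpace E]
  [IsTopologicalAddGroup E] [ContinuousSMul R E]

open scoped Pointwise

theorem IsUnit.smul_mem_interior_of_smul_subset {M X : Type*} [Monoid M] [MulAction M X]
    [TopologicalSpace X] [ContinuousConstSMul M X] {a : M} (ha : IsUnit a) {s : Set X}
    (hs : a • s ⊆ s) {x : X} (hx : x ∈ interior s) : a • x ∈ interior s :=
  interior_mono hs (ha.isOpenMap_smul.image_interior_subset s ⟨x, hx, rfl⟩)

namespace IsCone

variable {R E : Type*} [Ring R] [PartialOrder R] [IsOrderedRing R] [AddCommGroup E] [Module R E]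
  [TopologicalSpace E] {P : Set E}

theorem smul_mem (hP : IsCone R P) {a : R} (ha : 0 ≤ a) {x : E} (hx : x ∈ P) : a • x ∈ P := by
  simpa using hP.2.2.2.1 a 0 ha le_rfl x hx x hx

theorem smul_subset (hP : IsCone R P) {a : R} (ha : 0 ≤ a) : a • P ⊆ P := by
  rintro _ ⟨x, hx, rfl⟩
  exact hP.smul_mem ha hx

theorem eq_zero_of_mem_of_neg_mem (hP : IsCone R P) {x : E} (hx : x ∈ P) (hnx : -x ∈ P) :
    x = 0 := by
  have hmem : x ∈ P ∩ -P := ⟨hx, hnx⟩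
  rwa [hP.2.2.2.2] at hmem

end IsCone

/-- If there is a sequence of positive invertible scalars tending to , and
 with  for every , then . -/
theorem eq_zero_of_le_all_interior (P : Set E) (hP : IsCone R P)
    (hint : (interior P).Nonempty)
    (α : ℕ → R) (hunit : ∀ n, IsUnit (α n)) (hpos : ∀ n, 0 < α n)
    (hα : Tendsto α atTop (𝓝 (0 : R)))
    (u : E) (hu : u ∈ P) (h : ∀ c ∈ interior P, c - u ∈ interior P) :
    u = 0 := by
  obtain ⟨c, hc⟩ := hint
  have hmem : ∀ n, α n • c - u ∈ P := fun n =>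
    interior_subset <| h _ <|
      (hunit n).smul_mem_interior_of_smul_subset (hP.smul_subset (hpos n).le) hc
  have hlim : Tendsto (fun n => α n • c - u) atTop (𝓝 (-u)) := by
    simpa using (hα.smul_const c).sub_const u
  exact hP.eq_zero_of_mem_of_neg_mem hu <|
    hP.1.mem_of_tendsto hlim (Eventually.of_forall hmem)
end

section
/- Let P be a cone in a topological R-module E and let λ ∈ K with 0 ≺ 1 − λ, where K is the set of elements k ≽ 0 of R for which Σ k^n converges (so 1 − λ is invertible and λ^n → 0). Then φ : P → P, φ(t) = λ·t, is a comparison function: φ(0) = 0 and φ(t) <_P t for t ∈ P \ {0}; φ is monotone for ≤_P; t ∈ int P implies t − φ(t) ∈ int P; and for t ∈ P \ {0} and 0 ≪ c there exists n_0 with φ^n(t) ≪ c for all n ≥ n_0. -/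
open Filter Topology

variable {R : Type*} [Ring R] [PartialOrder R] [IsOrderedRing R] [TopologicalSpace R] [IsTopologicalRing R]
variable {E : Type*} [AddCommGroup E] [Module R E] [TopologicalSpace E]
  [IsTopologicalAddGroup E] [ContinuousSMul R E]

/-!
If the partial sums `s N = 1 + λ + ⋯ + λ^N` have the unique limit `S`, then `λ S + 1` and
`S λ + 1`, being limits of the shifted sequence `s (N + 1)`, both equal `S`; hence `1 - λ` is a unit
with inverse `S`. Moreover `λ^(N+1) = s (N + 1) - s N → S - S = 0`. Since `0 ≤ 1 - λ`, the unit
`1 - λ` maps `P` into `P`, and being a homeomorphism of `E` it maps `interior P` into `interior P`;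
injectivity of `t ↦ (1 - λ) • t` gives `λ • t ≠ t` for `t ≠ 0`, and `λ^n • t → 0` gives the last
property.
-/

open Finset

theorem tendsto_nhds_zero_of_tendsto_sum_range {G : Type*} [AddCommGroup G] [TopologicalSpace G]
    [IsTopologicalAddGroup G] {f : ℕ → G} {S : G}
    (h : Tendsto (fun N => ∑ i ∈ range N, f i) atTop (𝓝 S)) : Tendsto f atTop (𝓝 0) := by
  simpa only [sum_range_succ_sub_sum, sub_self] using ((tendsto_add_atTop_iff_nat 1).mpr h).sub h

theorem isUnit_one_sub_of_existsUnique_tendsto_geom_sum {A : Type*} [Ring A] [TopologicalSpace A]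
    [IsTopologicalRing A] {x : A}
    (h : ∃! S : A, Tendsto (fun N : ℕ => ∑ i ∈ range (N + 1), x ^ i) atTop (𝓝 S)) :
    IsUnit (1 - x) := by
  obtain ⟨S, hS, huniq⟩ := h
  have hsucc (N : ℕ) : ∑ i ∈ range (N + 1 + 1), x ^ i = x * ∑ i ∈ range (N + 1), x ^ i + 1 :=
    geom_sum_succ
  have hcomm (N : ℕ) : x * ∑ i ∈ range N, x ^ i = (∑ i ∈ range N, x ^ i) * x :=
    (Commute.sum_right _ _ _ fun i _ => Commute.self_pow x i).eq
  have hleft : x * S + 1 = S := huniq _ <| (tendsto_add_atTop_iff_nat 1).mp <| by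
    simp_rw [hsucc]
    exact (hS.const_mul x).add_const 1
  have hright : S * x + 1 = S := huniq _ <| (tendsto_add_atTop_iff_nat 1).mp <| by
    simp_rw [hsucc, hcomm]
    exact (hS.mul_const x).add_const 1
  refine isUnit_iff_exists.2 ⟨S, ?_, ?_⟩
  · rw [sub_mul, one_mul, sub_eq_iff_eq_add, add_comm, hleft]
  · rw [mul_sub, mul_one, sub_eq_iff_eq_add, add_comm, hright]

theorem IsUnit.smul_mem_interior {A M : Type*} [Monoid A] [MulAction A M] [TopologicalSpace M]
    [ContinuousConstSMul A M] {u : A} (hu : IsUnit u) {P : Set M} (hP : ∀ t ∈ P, u • t ∈ P)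
    {t : M} (ht : t ∈ interior P) : u • t ∈ interior P :=
  interior_maximal (Set.image_subset_iff.2 fun _ hs => hP _ (interior_subset hs))
    (hu.isOpenMap_smul _ isOpen_interior) (Set.mem_image_of_mem _ ht)

theorem IsCone.smul_mem_s17 {A M : Type*} [Ring A] [PartialOrder A] [IsOrderedRing A] [AddCommGroup M]
    [Module A M] [TopologicalSpace M] {P : Set M} (hP : IsCone A P) {a : A} (ha : 0 ≤ a) {t : M}
    (ht : t ∈ P) : a • t ∈ P := by
  simpa using hP.2.2.2.1 a 0 ha le_rfl t ht t ht

theorem smul_is_comparison_function_general (P : Set E) (hP : IsCone R P)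
    (lam : R) (hlam : 0 ≤ lam)
    (hser : ∃! S : R, Tendsto (fun N : ℕ => ∑ i ∈ Finset.range (N + 1), lam ^ i)
      atTop (𝓝 S))
    (hlt : 0 < 1 - lam) :
    (∀ t ∈ P, lam • t ∈ P) ∧
    (lam • (0 : E) = 0 ∧ ∀ t ∈ P, t ≠ 0 → t - lam • t ∈ P ∧ lam • t ≠ t) ∧
    (∀ t₁ t₂ : E, t₂ - t₁ ∈ P → lam • t₂ - lam • t₁ ∈ P) ∧
    (∀ t ∈ interior P, t - lam • t ∈ interior P) ∧
    (∀ t ∈ P, t ≠ 0 → ∀ c ∈ interior P, ∃ n₀ : ℕ, ∀ n ≥ n₀,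
      c - lam ^ n • t ∈ interior P) := by
  have hunit : IsUnit (1 - lam) := isUnit_one_sub_of_existsUnique_tendsto_geom_sum hser
  have hpow : Tendsto (lam ^ ·) atTop (𝓝 0) := by
    obtain ⟨S, hS, -⟩ := hser
    exact tendsto_nhds_zero_of_tendsto_sum_range ((tendsto_add_atTop_iff_nat 1).mp hS)
  refine ⟨fun t ht => hP.smul_mem_s17 hlam ht, ⟨smul_zero lam, fun t ht ht0 => ⟨?_, ?_⟩⟩,
    fun t₁ t₂ h => ?_, fun t ht => ?_, fun t _ _ c hc => ?_⟩
  · simpa [sub_smul] using hP.smul_mem_s17 hlt.le ht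
  · intro hfix
    apply ht0
    rw [← hunit.smul_eq_zero, sub_smul, one_smul, hfix, sub_self]
  · simpa [smul_sub] using hP.smul_mem_s17 hlam h
  · simpa [sub_smul] using hunit.smul_mem_interior (fun s hs => hP.smul_mem_s17 hlt.le hs) ht
  · have hlim : Tendsto (fun n => c - lam ^ n • t) atTop (𝓝 c) := by
      simpa using tendsto_const_nhds.sub (hpow.smul_const t)
    exact eventually_atTop.mp (hlim.eventually (isOpen_interior.mem_nhds hc))

/-- For `λ ∈ K` with `0 ≺ 1 - λ`, the map `φ(t) = λ • t` is a comparison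
function on the cone `P`. -/
theorem smul_is_comparison_function (P : Set E) (hP : IsCone R P)
    (hint : (interior P).Nonempty)
    (lam : R) (hlam : 0 ≤ lam)
    (hser : ∃! S : R, Tendsto (fun N : ℕ => ∑ i ∈ Finset.range (N + 1), lam ^ i)
      atTop (𝓝 S))
    (hlt : 0 < 1 - lam) :
    (∀ t ∈ P, lam • t ∈ P) ∧
    (lam • (0 : E) = 0 ∧ ∀ t ∈ P, t ≠ 0 → t - lam • t ∈ P ∧ lam • t ≠ t) ∧
    (∀ t₁ t₂ : E, t₂ - t₁ ∈ P → lam • t₂ - lam • t₁ ∈ P) ∧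
    (∀ t ∈ interior P, t - lam • t ∈ interior P) ∧
    (∀ t ∈ P, t ≠ 0 → ∀ c ∈ interior P, ∃ n₀ : ℕ, ∀ n ≥ n₀,
      c - lam ^ n • t ∈ interior P) :=
  smul_is_comparison_function_general P hP lam hlam hser hlt
end
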